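/- arXiv:1311.4809 — 4 statements merged into one kernel-verified Lean document; each statement's English description precedes it below -/
import Mathlib

section
/- For every real λ > 0 and every positive integer K, the limit as n → ∞ of the sum Σ_{ℓ=0}^{n−2} min(1, K/(ℓ+1)) · C(n−2, ℓ) · (λ/n)^ℓ · (1 − λ/n)^{n−ℓ−2} exists and equals h(λ) = (K/λ)·(1 − e^{−λ}·Σ_{k=0}^{K} λ^k/k!) + e^{−λ}·Σ_{m=0}^{K−1} λ^m/m!. -/
open Filter Finset

/-- `h(λ) = (K/λ)·(1 − e^{−λ}·Σ_{k=0}^{K} λ^k/k!) + e^{−λ}·Σ_{m=0}^{K−1} λ^m/m!`. -/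
noncomputable def hFun (K : ℕ) (lam : ℝ) : ℝ :=
  ((K : ℝ) / lam) *
      (1 - Real.exp (-lam) * ∑ k ∈ Finset.range (K + 1), lam ^ k / (Nat.factorial k)) +
    Real.exp (-lam) * ∑ m ∈ Finset.range K, lam ^ m / (Nat.factorial m)

/-!
The summand is `min(1, K/(ℓ+1))` times the probability that a `Bin(n−2, λ/n)` variable equals
`ℓ`. By the Poisson limit theorem these probabilities tend to `e^{−λ}λ^ℓ/ℓ!`, and they are
bounded by `λ^ℓ/ℓ!` uniformly in `n`, so Tannery's theorem moves the limit inside the sum. In the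
limiting series the terms with `ℓ ≥ K` equal `(K/λ)·e^{−λ}λ^{ℓ+1}/(ℓ+1)!`, so they sum to
`(K/λ)·(1 − e^{−λ}Σ_{k≤K} λ^k/k!)`, while the terms with `ℓ < K` give the second part of `h(λ)`.
-/

open Topology Nat Real

theorem tendsto_choose_sub_mul_pow_poisson (x : ℝ) (c l : ℕ) :
    Tendsto (fun n : ℕ => ((n - c).choose l : ℝ) * (x / n) ^ l * (1 - x / n) ^ (n - l - c))
      atTop (𝓝 (exp (-x) * x ^ l / l !)) := by
  have hpoisson := ProbabilityTheory.tendsto_choose_mul_pow_of_tendsto_mul_atTop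
    (p := fun m : ℕ => x / (m + c)) (r := x) l <| by
      convert (tendsto_natCast_div_add_atTop (c : ℝ)).mul_const x using 1
      · ext m; ring
      · rw [one_mul]
  refine (hpoisson.comp (tendsto_sub_atTop_nat c)).congr' ?_
  filter_upwards [eventually_ge_atTop c] with n hn
  simp [Nat.cast_sub hn, Nat.sub_right_comm n l c]

theorem choose_mul_div_pow_mul_one_sub_pow_le {x : ℝ} {n : ℕ} (hx : 0 ≤ x) (hxn : x ≤ n) {m : ℕ}
    (hm : m ≤ n) (l k : ℕ) :
    (m.choose l : ℝ) * (x / n) ^ l * (1 - x / n) ^ k ≤ x ^ l / l ! := by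
  have hq : 0 ≤ x / n := by positivity
  have hq1 : x / n ≤ 1 := div_le_one_of_le₀ hxn n.cast_nonneg
  calc (m.choose l : ℝ) * (x / n) ^ l * (1 - x / n) ^ k
      ≤ ((n : ℝ) ^ l / l !) * (x / n) ^ l * 1 := by
        gcongr
        · exact (Nat.cast_le.mpr (Nat.choose_le_choose l hm)).trans (Nat.choose_le_pow_div l n)
        · exact pow_le_one₀ (by linarith) (by linarith)
    _ = (n * (x / n)) ^ l / l ! := by ring
    _ ≤ x ^ l / l ! := by
        gcongr
        rcases eq_or_ne (n : ℝ) 0 with hn | hn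
        · simp [hn, hx]
        · rw [mul_div_cancel₀ x hn]

theorem tendsto_sum_mul_choose_sub_mul_pow {x : ℝ} (hx : 0 ≤ x) (c : ℕ) {w : ℕ → ℝ}
    (hw : ∀ l, |w l| ≤ 1) :
    Tendsto (fun n : ℕ => ∑ l ∈ range (n - c + 1),
        w l * ((n - c).choose l : ℝ) * (x / n) ^ l * (1 - x / n) ^ (n - l - c))
      atTop (𝓝 (∑' l, w l * (exp (-x) * x ^ l / l !))) := by
  have hsum : ∀ n : ℕ,
      ∑' l, w l * ((n - c).choose l : ℝ) * (x / n) ^ l * (1 - x / n) ^ (n - l - c) =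
        ∑ l ∈ range (n - c + 1),
          w l * ((n - c).choose l : ℝ) * (x / n) ^ l * (1 - x / n) ^ (n - l - c) := fun n =>
    tsum_eq_sum fun l hl => by
      rw [Nat.choose_eq_zero_of_lt (by simpa [Nat.lt_succ_iff] using hl)]
      simp
  simp_rw [← hsum]
  refine tendsto_tsum_of_dominated_convergence (Real.summable_pow_div_factorial x)
    (fun l => ?_) ?_
  · simp_rw [mul_assoc (w l)]
    exact (tendsto_choose_sub_mul_pow_poisson x c l).const_mul (w l)
  · filter_upwards [tendsto_natCast_atTop_atTop.eventually_ge_atTop x] with n hxn l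
    have hq : 0 ≤ 1 - x / n := sub_nonneg.mpr (div_le_one_of_le₀ hxn n.cast_nonneg)
    calc ‖w l * ((n - c).choose l : ℝ) * (x / n) ^ l * (1 - x / n) ^ (n - l - c)‖
        = |w l| * (((n - c).choose l : ℝ) * (x / n) ^ l * (1 - x / n) ^ (n - l - c)) := by
          rw [Real.norm_eq_abs, ← abs_of_nonneg (by positivity :
            0 ≤ ((n - c).choose l : ℝ) * (x / n) ^ l * (1 - x / n) ^ (n - l - c)), ← abs_mul]
          ring_nf
      _ ≤ 1 * (x ^ l / l !) := by
          gcongr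
          exacts [hw l, choose_mul_div_pow_mul_one_sub_pow_le hx hxn (Nat.sub_le n c) l _]
      _ = x ^ l / l ! := one_mul _

theorem hasSum_pow_div_factorial_nat_add (x : ℝ) (m : ℕ) :
    HasSum (fun l => x ^ (l + m) / (l + m)!) (exp x - ∑ j ∈ range m, x ^ j / j !) :=
  (hasSum_nat_add_iff' m).mpr (Real.exp_eq_exp_ℝ ▸ NormedSpace.expSeries_div_hasSum_exp x)

theorem hasSum_min_one_div_mul_poisson (K : ℕ) {x : ℝ} (hx : x ≠ 0) :
    HasSum (fun l : ℕ => min 1 ((K : ℝ) / (l + 1)) * (exp (-x) * x ^ l / l !)) (hFun K x) := by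
  rw [← hasSum_nat_add_iff' K]
  have head : ∑ l ∈ range K, min 1 ((K : ℝ) / (l + 1)) * (exp (-x) * x ^ l / l !) =
      exp (-x) * ∑ l ∈ range K, x ^ l / l ! := by
    rw [mul_sum]
    refine sum_congr rfl fun l hl => ?_
    rw [min_eq_left ((one_le_div (by positivity)).mpr (by exact_mod_cast mem_range.mp hl))]
    ring
  have tail : ∀ l : ℕ, min 1 ((K : ℝ) / (↑(l + K) + 1)) * (exp (-x) * x ^ (l + K) / (l + K)!) =
      K / x * exp (-x) * (x ^ (l + (K + 1)) / (l + (K + 1))!) := by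
    intro l
    have hK : (K : ℝ) ≤ ↑(l + K) + 1 := by push_cast; linarith [l.cast_nonneg (α := ℝ)]
    rw [min_eq_right ((div_le_one (by positivity)).mpr hK), ← add_assoc, Nat.factorial_succ,
      pow_succ]
    push_cast
    field_simp
  have total : hFun K x - exp (-x) * ∑ l ∈ range K, x ^ l / l ! =
      K / x * exp (-x) * (exp x - ∑ j ∈ range (K + 1), x ^ j / j !) := by
    rw [hFun, mul_sub (_ * _), mul_assoc _ (exp (-x)), ← Real.exp_add, neg_add_cancel,
      Real.exp_zero]
    ring
  simp_rw [tail, head, total]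
  exact (hasSum_pow_div_factorial_nat_add x (K + 1)).mul_left _

theorem stmt0_general (lam : ℝ) (hlam : 0 < lam) (K : ℕ) :
    Tendsto
      (fun n : ℕ =>
        ∑ l ∈ Finset.range (n - 1),
          min 1 ((K : ℝ) / (l + 1)) * ((n - 2).choose l : ℝ) * (lam / n) ^ l *
            (1 - lam / n) ^ (n - l - 2))
      atTop (nhds (hFun K lam)) := by
  have hw : ∀ l : ℕ, |min 1 ((K : ℝ) / (l + 1))| ≤ 1 := fun l => by
    rw [abs_of_nonneg (by positivity)]
    exact min_le_left _ _
  rw [← (hasSum_min_one_div_mul_poisson K hlam.ne').tsum_eq]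
  refine (tendsto_sum_mul_choose_sub_mul_pow hlam.le 2 hw).congr' ?_
  filter_upwards [eventually_ge_atTop 2] with n hn
  rw [show n - 2 + 1 = n - 1 by omega]

/-- The limit as `n → ∞` of
`Σ_{ℓ=0}^{n−2} min(1, K/(ℓ+1)) · C(n−2, ℓ) · (λ/n)^ℓ · (1 − λ/n)^{n−ℓ−2}`
exists and equals `h(λ)`. -/
theorem stmt0 (lam : ℝ) (hlam : 0 < lam) (K : ℕ) (hK : 0 < K) :
    Tendsto
      (fun n : ℕ =>
        ∑ l ∈ Finset.range (n - 1),
          min 1 ((K : ℝ) / (l + 1)) * ((n - 2).choose l : ℝ) * (lam / n) ^ l *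
            (1 - lam / n) ^ (n - l - 2))
      atTop (nhds (hFun K lam)) :=
  stmt0_general lam hlam K
end

section
/- For every real λ > 0 and every positive integer K, Σ_{ℓ=0}^{∞} min(1, K/(ℓ+1)) · e^{−λ}·λ^ℓ/ℓ! = h(λ), where h(λ) = (K/λ)·(1 − e^{−λ}·Σ_{k=0}^{K} λ^k/k!) + e^{−λ}·Σ_{m=0}^{K−1} λ^m/m!. -/
/-!
Split the series at `ℓ = K`. For `ℓ < K` the weight `min(1, K/(ℓ+1))` is `1`, which gives the
last term of `h`. For `ℓ ≥ K` it is `K/(ℓ+1)`, and `λ^ℓ/(ℓ+1)·1/ℓ! = λ^{ℓ+1}/(ℓ+1)! / λ` turns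
the tail into `K/λ` times the Poisson tail `Σ_{k>K} e^{−λ}λ^k/k! = 1 − e^{−λ}Σ_{k≤K} λ^k/k!`.
-/

open Finset

open Real Nat

theorem min_one_div_succ_of_lt {K l : ℕ} (h : l < K) : min 1 ((K : ℝ) / (l + 1)) = 1 :=
  min_eq_left <| (one_le_div (by positivity)).2 (by exact_mod_cast h)

theorem min_one_div_succ_of_le {K l : ℕ} (h : K ≤ l) :
    min 1 ((K : ℝ) / (l + 1)) = K / (l + 1) :=
  min_eq_right <| (div_le_one (by positivity)).2 (by exact_mod_cast h.trans l.le_succ)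

theorem hasSum_exp_neg_mul_pow_div_factorial (x : ℝ) :
    HasSum (fun n : ℕ => exp (-x) * x ^ n / n !) 1 := by
  have h := (NormedSpace.expSeries_div_hasSum_exp x).mul_left (exp (-x))
  rw [← exp_eq_exp_ℝ, ← exp_add, neg_add_cancel, exp_zero] at h
  simpa only [mul_div_assoc] using h

theorem hasSum_exp_neg_mul_pow_div_factorial_nat_add (x : ℝ) (k : ℕ) :
    HasSum (fun n : ℕ => exp (-x) * x ^ (n + k) / (n + k)!)
      (1 - ∑ j ∈ range k, exp (-x) * x ^ j / j !) :=
  (hasSum_nat_add_iff' k).2 (hasSum_exp_neg_mul_pow_div_factorial x)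

theorem div_succ_mul_exp_neg_mul_pow_div_factorial {x : ℝ} (hx : x ≠ 0) (c : ℝ) (n : ℕ) :
    c / (n + 1) * (exp (-x) * x ^ n / n !) = c / x * (exp (-x) * x ^ (n + 1) / (n + 1)!) := by
  rw [factorial_succ, pow_succ]
  push_cast
  field_simp

theorem stmt4_general (lam : ℝ) (hlam : 0 < lam) (K : ℕ) :
    HasSum
      (fun l : ℕ =>
        min 1 ((K : ℝ) / (l + 1)) * (Real.exp (-lam) * lam ^ l / (Nat.factorial l)))
      (hFun K lam) := by
  refine (hasSum_nat_add_iff' K).1 ?_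
  have head : ∑ i ∈ range K, min 1 ((K : ℝ) / (i + 1)) * (exp (-lam) * lam ^ i / i !) =
      ∑ i ∈ range K, exp (-lam) * lam ^ i / i ! :=
    sum_congr rfl fun i hi => by rw [min_one_div_succ_of_lt (mem_range.1 hi), one_mul]
  have rest : hFun K lam - ∑ i ∈ range K, exp (-lam) * lam ^ i / i ! =
      K / lam * (1 - ∑ j ∈ range (K + 1), exp (-lam) * lam ^ j / j !) := by
    simp only [hFun, mul_sum, mul_div_assoc, add_sub_cancel_right]
  rw [head, rest]
  refine ((hasSum_exp_neg_mul_pow_div_factorial_nat_add lam (K + 1)).mul_left _).congr_fun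
    fun n => ?_
  rw [min_one_div_succ_of_le (K.le_add_left n), ← add_assoc]
  exact div_succ_mul_exp_neg_mul_pow_div_factorial hlam.ne' _ _

/-- `Σ_{ℓ=0}^{∞} min(1, K/(ℓ+1)) · e^{−λ}·λ^ℓ/ℓ! = h(λ)`:  `h(λ)` is the
expectation of `min(1, K/(L+1))` for `L` Poisson with mean `λ`. -/
theorem stmt4 (lam : ℝ) (hlam : 0 < lam) (K : ℕ) (hK : 0 < K) :
    HasSum
      (fun l : ℕ =>
        min 1 ((K : ℝ) / (l + 1)) * (Real.exp (-lam) * lam ^ l / (Nat.factorial l)))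
      (hFun K lam) :=
  stmt4_general lam hlam K
end

section
/- For every real λ > 0 and every positive integer K, the quantity h(λ) = (K/λ)·(1 − e^{−λ}·Σ_{k=0}^{K} λ^k/k!) + e^{−λ}·Σ_{m=0}^{K−1} λ^m/m! satisfies 0 < h(λ) ≤ 1. -/
open Finset

lemma exp_tsum' (x : ℝ) : Real.exp x = ∑' n : ℕ, x ^ n / (Nat.factorial n) := by
  rw [Real.exp_eq_exp_ℝ, NormedSpace.exp_eq_tsum_div]

lemma succ_term_eq (x : ℝ) :
    (fun n : ℕ => ((n + 1 : ℕ) : ℝ) * x ^ (n + 1) / (Nat.factorial (n + 1)))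
      = fun n : ℕ => x * (x ^ n / (Nat.factorial n)) := by
  funext n
  rw [Nat.factorial_succ, pow_succ]
  have h1 : ((Nat.factorial n : ℝ)) ≠ 0 := by positivity
  push_cast
  field_simp

lemma summable_mul_pow_div_factorial (x : ℝ) :
    Summable (fun n : ℕ => (n : ℝ) * x ^ n / (Nat.factorial n)) := by
  rw [← summable_nat_add_iff 1, succ_term_eq x]
  exact (Real.summable_pow_div_factorial x).mul_left x

lemma tsum_mul_pow_div_factorial (x : ℝ) :
    ∑' n : ℕ, (n : ℝ) * x ^ n / (Nat.factorial n) = x * Real.exp x := by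
  rw [Summable.tsum_eq_zero_add (summable_mul_pow_div_factorial x), succ_term_eq x,
    tsum_mul_left, ← exp_tsum']
  simp

/-- For every `λ > 0` and positive integer `K`, `0 < h(λ) ≤ 1`. -/
theorem stmt5 (lam : ℝ) (hlam : 0 < lam) (K : ℕ) (hK : 0 < K) :
    0 < hFun K lam ∧ hFun K lam ≤ 1 := by
  have hexp : (0:ℝ) < Real.exp (-lam) := Real.exp_pos _
  have hsummable := Real.summable_pow_div_factorial lam
  set E := Real.exp (-lam) with hE
  set S := ∑ k ∈ Finset.range (K + 1), lam ^ k / (Nat.factorial k) with hSdef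
  set T := ∑ m ∈ Finset.range K, lam ^ m / (Nat.factorial m) with hTdef
  have hS_le : S ≤ Real.exp lam := by
    rw [hSdef, exp_tsum']
    exact Summable.sum_le_tsum _ (fun k _ => by positivity) hsummable
  have hEmul : E * Real.exp lam = 1 := by
    rw [hE, ← Real.exp_add]; simp
  -- positivity
  have h1 : 0 ≤ ((K : ℝ) / lam) * (1 - E * S) := by
    apply mul_nonneg (by positivity)
    rw [sub_nonneg]
    calc E * S ≤ E * Real.exp lam := by
          apply mul_le_mul_of_nonneg_left hS_le hexp.le
      _ = 1 := hEmul
  have h2 : 0 < E * T := by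
    apply mul_pos hexp
    apply Finset.sum_pos (fun i _ => by positivity)
    exact Finset.nonempty_range_iff.mpr hK.ne'
  -- the key series inequality
  have hsummf : Summable (fun n : ℕ => ((K : ℝ) - n) * lam ^ n / (Nat.factorial n)) := by
    have : (fun n : ℕ => ((K : ℝ) - n) * lam ^ n / (Nat.factorial n))
        = fun n : ℕ => (K : ℝ) * (lam ^ n / (Nat.factorial n))
            - (n : ℝ) * lam ^ n / (Nat.factorial n) := by
      funext n; ring
    rw [this]
    exact (hsummable.mul_left _).sub (summable_mul_pow_div_factorial lam)
  have htsumf : ∑' n : ℕ, ((K : ℝ) - n) * lam ^ n / (Nat.factorial n)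
      = ((K : ℝ) - lam) * Real.exp lam := by
    have heq : (fun n : ℕ => ((K : ℝ) - n) * lam ^ n / (Nat.factorial n))
        = fun n : ℕ => (K : ℝ) * (lam ^ n / (Nat.factorial n))
            - (n : ℝ) * lam ^ n / (Nat.factorial n) := by
      funext n; ring
    rw [heq, Summable.tsum_sub (hsummable.mul_left _) (summable_mul_pow_div_factorial lam),
      tsum_mul_left, ← exp_tsum', tsum_mul_pow_div_factorial]
    ring
  have key : ((K : ℝ) - lam) * Real.exp lam
      ≤ ∑ n ∈ Finset.range (K + 1), ((K : ℝ) - n) * lam ^ n / (Nat.factorial n) := by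
    rw [← htsumf, ← Summable.sum_add_tsum_nat_add (K + 1) hsummf]
    have htail : ∑' i : ℕ, ((K : ℝ) - (i + (K + 1) : ℕ)) * lam ^ (i + (K + 1)) /
        (Nat.factorial (i + (K + 1))) ≤ 0 := by
      apply tsum_nonpos
      intro i
      apply div_nonpos_of_nonpos_of_nonneg
      · apply mul_nonpos_of_nonpos_of_nonneg
        · push_cast; linarith
        · positivity
      · positivity
    linarith
  -- rewrite the finite sum
  have hsum_eq : ∑ n ∈ Finset.range (K + 1), ((K : ℝ) - n) * lam ^ n / (Nat.factorial n)
      = (K : ℝ) * S - lam * T := by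
    have hsplit : ∀ n : ℕ, ((K : ℝ) - n) * lam ^ n / (Nat.factorial n)
        = (K : ℝ) * (lam ^ n / (Nat.factorial n)) - (n : ℝ) * lam ^ n / (Nat.factorial n) := by
      intro n; ring
    simp only [hsplit]
    rw [Finset.sum_sub_distrib, ← Finset.mul_sum, ← hSdef]
    congr 1
    rw [Finset.sum_range_succ']
    simp only [Nat.cast_zero, zero_mul, pow_zero, Nat.factorial_zero, Nat.cast_one, zero_div,
      add_zero]
    rw [Finset.mul_sum]
    apply Finset.sum_congr rfl
    intro i _
    have := congrFun (succ_term_eq lam) i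
    rw [this]
  rw [hsum_eq] at key
  -- conclude
  have h3 : (K : ℝ) - lam ≤ E * ((K : ℝ) * S - lam * T) := by
    calc (K : ℝ) - lam = E * (((K : ℝ) - lam) * Real.exp lam) := by
          rw [show E * (((K : ℝ) - lam) * Real.exp lam) = ((K : ℝ) - lam) * (E * Real.exp lam) by
            ring, hEmul, mul_one]
      _ ≤ E * ((K : ℝ) * S - lam * T) := by
          apply mul_le_mul_of_nonneg_left key hexp.le
  have hform : hFun K lam = ((K : ℝ) * (1 - E * S) + lam * (E * T)) / lam := by
    unfold hFun
    rw [← hE, ← hSdef, ← hTdef]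
    field_simp
  constructor
  · rw [show hFun K lam = ((K : ℝ) / lam) * (1 - E * S) + E * T from rfl]
    linarith
  · rw [hform, div_le_one hlam]
    nlinarith [h3]
end

section
/- Let α > 2, ρ > 0, ρ_c > 0 and N > 0 be real numbers, and let μ be a probability measure on ℝ such that μ((x, ∞)) = e^{−ρ_c·π·x²} for every x ≥ 0. Then for every τ > 0, the μ-measure of the set of r > 0 satisfying log₂(1 + (N·α·sin(2π/α)/(2π²·ρ·r²))^{α/2}) ≤ τ equals exp(−(ρ_c/ρ)·N·(α/(2π))·sin(2π/α)·(2^τ − 1)^{−2/α}). -/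
/-!
For `r > 0` the spectral efficiency is a strictly decreasing function of `r`, so the event
`γ(r) ≤ τ` is the half-line `r ≥ r_τ` with
`r_τ² = N·α·sin(2π/α) / (2π²·ρ) · (2^τ − 1)^(−2/α)`. The survival function
`x ↦ e^{−ρ_c·π·x²}` is continuous, so `μ` has no atom at `r_τ` and
`μ([r_τ, ∞)) = μ((r_τ, ∞)) = e^{−ρ_c·π·r_τ²}`, which is the claimed expression.
-/

open Real MeasureTheory Set Filter Topology

theorem measure_Ici_eq_ofReal_of_measure_Ioi {μ : Measure ℝ} [IsFiniteMeasure μ] {F : ℝ → ℝ}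
    {x₀ : ℝ} (hF : ContinuousWithinAt F (Iio x₀) x₀)
    (hμ : ∀ᶠ x in 𝓝[<] x₀, μ (Ioi x) = ENNReal.ofReal (F x)) :
    μ (Ici x₀) = ENNReal.ofReal (F x₀) := by
  have hshift : Tendsto (fun r => x₀ - r) (𝓝[>] 0) (𝓝[<] x₀) := by
    refine tendsto_nhdsWithin_of_tendsto_nhds_of_eventually_within _
      (tendsto_nhdsWithin_of_tendsto_nhds
        ((continuous_sub_left x₀).tendsto' 0 x₀ (sub_zero x₀))) ?_
    filter_upwards [self_mem_nhdsWithin] with r (hr : 0 < r)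
    simpa using hr
  have hIci : ⋂ r > (0 : ℝ), Ioi (x₀ - r) = Ici x₀ := by
    ext x
    simp only [mem_iInter, mem_Ioi, mem_Ici]
    exact ⟨fun h => le_of_forall_pos_lt_add fun ε hε => by linarith [h ε hε],
      fun h r hr => by linarith⟩
  have hlim : Tendsto (fun r => μ (Ioi (x₀ - r))) (𝓝[>] 0) (𝓝 (μ (Ici x₀))) := by
    rw [← hIci]
    exact tendsto_measure_biInter_gt (fun r _ => nullMeasurableSet_Ioi)
      (fun i j _ hij => Ioi_subset_Ioi (by linarith)) ⟨1, one_pos, measure_ne_top μ _⟩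
  refine tendsto_nhds_unique hlim
    (((ENNReal.continuous_ofReal.tendsto _).comp (hF.tendsto.comp hshift)).congr' ?_)
  filter_upwards [hshift.eventually hμ] with r hr using hr.symm

theorem logb_two_one_add_rpow_div_sq_le_iff {K p τ r : ℝ} (hK : 0 < K) (hp : 0 < p)
    (hτ : 0 < τ) (hr : 0 < r) :
    logb 2 (1 + (K / r ^ 2) ^ p) ≤ τ ↔ K * (2 ^ τ - 1) ^ (-p⁻¹) ≤ r ^ 2 := by
  have hT : 0 < (2 : ℝ) ^ τ - 1 := sub_pos.2 (one_lt_rpow one_lt_two hτ)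
  calc logb 2 (1 + (K / r ^ 2) ^ p) ≤ τ
      ↔ (K / r ^ 2) ^ p ≤ 2 ^ τ - 1 := by
        rw [logb_le_iff_le_rpow one_lt_two (by positivity), le_sub_iff_add_le']
    _ ↔ K / r ^ 2 ≤ (2 ^ τ - 1) ^ p⁻¹ := (le_rpow_inv_iff_of_pos (by positivity) hT.le hp).symm
    _ ↔ K * (2 ^ τ - 1) ^ (-p⁻¹) ≤ r ^ 2 := by
        rw [rpow_neg hT.le, ← div_eq_mul_inv, div_le_iff₀ (by positivity),
          div_le_iff₀ (by positivity), mul_comm]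

theorem setOf_logb_two_one_add_rpow_div_sq_le {K p τ : ℝ} (hK : 0 < K) (hp : 0 < p)
    (hτ : 0 < τ) :
    {r : ℝ | 0 < r ∧ logb 2 (1 + (K / r ^ 2) ^ p) ≤ τ} = Ici √(K * (2 ^ τ - 1) ^ (-p⁻¹)) := by
  have hc : 0 < K * (2 ^ τ - 1) ^ (-p⁻¹) :=
    mul_pos hK (rpow_pos_of_pos (sub_pos.2 (one_lt_rpow one_lt_two hτ)) _)
  ext r
  simp only [mem_ofPred_eq, mem_Ici]
  constructor
  · rintro ⟨hr, hle⟩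
    exact (sqrt_le_left hr.le).2 ((logb_two_one_add_rpow_div_sq_le_iff hK hp hτ hr).1 hle)
  · intro hle
    have hr : 0 < r := (sqrt_pos.2 hc).trans_le hle
    exact ⟨hr, (logb_two_one_add_rpow_div_sq_le_iff hK hp hτ hr).2 ((sqrt_le_left hr.le).1 hle)⟩

theorem stmt8_general (α ρ ρc N : ℝ) (hα : 2 < α) (hρ : 0 < ρ) (hN : 0 < N)
    (μ : Measure ℝ) [IsProbabilityMeasure μ]
    (hμ : ∀ x : ℝ, 0 ≤ x → μ (Set.Ioi x) = ENNReal.ofReal (Real.exp (-(ρc * π * x ^ 2)))) :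
    ∀ τ : ℝ, 0 < τ →
      μ {r : ℝ | 0 < r ∧
          Real.logb 2
              (1 + (N * α * Real.sin (2 * π / α) / (2 * π ^ 2 * ρ * r ^ 2)) ^ (α / 2)) ≤ τ}
        = ENNReal.ofReal
            (Real.exp (-(ρc / ρ * N * (α / (2 * π)) * Real.sin (2 * π / α) *
              ((2 : ℝ) ^ τ - 1) ^ (-(2 / α))))) := by
  intro τ hτ
  have hα₀ : 0 < α := by linarith
  have hsin : 0 < sin (2 * π / α) :=
    sin_pos_of_pos_of_lt_pi (by positivity) (by rw [div_lt_iff₀ hα₀]; nlinarith [pi_pos])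
  have hK : 0 < N * α * sin (2 * π / α) / (2 * π ^ 2 * ρ) := by positivity
  have hc : 0 < N * α * sin (2 * π / α) / (2 * π ^ 2 * ρ) * (2 ^ τ - 1) ^ (-(α / 2)⁻¹) :=
    mul_pos hK (rpow_pos_of_pos (sub_pos.2 (one_lt_rpow one_lt_two hτ)) _)
  simp only [← div_div (N * α * sin (2 * π / α)) (2 * π ^ 2 * ρ)]
  rw [setOf_logb_two_one_add_rpow_div_sq_le hK (by positivity) hτ,
    measure_Ici_eq_ofReal_of_measure_Ioi (F := fun x => exp (-(ρc * π * x ^ 2))) (by fun_prop)]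
  · rw [sq_sqrt hc.le, inv_div]
    congr 2
    field_simp
  · filter_upwards [Ioo_mem_nhdsLT (sqrt_pos.2 hc)] with x hx using hμ x hx.1.le

/-- CDF of the spectral efficiency (Equation (14)):  if `μ` is the law of the
link length, with survival function `μ((x,∞)) = e^{−ρ_c·π·x²}` for `x ≥ 0`,
then for every `τ > 0` the `μ`-measure of the set of `r > 0` with
`log₂(1 + (N·α·sin(2π/α)/(2π²·ρ·r²))^{α/2}) ≤ τ` equals
`exp(−(ρ_c/ρ)·N·(α/(2π))·sin(2π/α)·(2^τ − 1)^{−2/α})`. -/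
theorem stmt8 (α ρ ρc N : ℝ) (hα : 2 < α) (hρ : 0 < ρ) (hρc : 0 < ρc) (hN : 0 < N)
    (μ : Measure ℝ) [IsProbabilityMeasure μ]
    (hμ : ∀ x : ℝ, 0 ≤ x → μ (Set.Ioi x) = ENNReal.ofReal (Real.exp (-(ρc * π * x ^ 2)))) :
    ∀ τ : ℝ, 0 < τ →
      μ {r : ℝ | 0 < r ∧
          Real.logb 2
              (1 + (N * α * Real.sin (2 * π / α) / (2 * π ^ 2 * ρ * r ^ 2)) ^ (α / 2)) ≤ τ}
        = ENNReal.ofReal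
            (Real.exp (-(ρc / ρ * N * (α / (2 * π)) * Real.sin (2 * π / α) *
              ((2 : ℝ) ^ τ - 1) ^ (-(2 / α))))) :=
  stmt8_general α ρ ρc N hα hρ hN μ hμ
end
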